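/- Let G=(V,E) be a finite simple graph, K a field, and let H be a neighborhood-minor of G. Then the cut algebra K[H] is an algebra retract of the cut algebra K[G]. -/

import Mathlib

open scoped Classical

noncomputable section

namespace CutPaper

open MvPolynomial

/-- An edge `e` is cut by the partition `A | Aᶜ` if it has exactly one endpoint in `A`. -/
def IsCutEdge {V : Type} (A : Set V) (e : Sym2 V) : Prop :=
  ∃ u v : V, e = s(u, v) ∧ u ∈ A ∧ v ∉ A

/-- The cut set of `A`: all edges of `G` with exactly one endpoint in `A`. -/
def cutSet {V : Type} (G : SimpleGraph V) (A : Set V) : Set (Sym2 V) :=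
  {e ∈ G.edgeSet | IsCutEdge A e}

lemma isCutEdge_compl {V : Type} (A : Set V) (e : Sym2 V) :
    IsCutEdge Aᶜ e ↔ IsCutEdge A e := by
  constructor <;> rintro ⟨u, v, rfl, hu, hv⟩
  · exact ⟨v, u, Sym2.eq_swap, Set.notMem_compl_iff.mp hv, hu⟩
  · exact ⟨v, u, Sym2.eq_swap, hv, not_not_intro hu⟩

/-- Two subsets determine the same unordered partition `A | Aᶜ` of `V`
iff they are equal or complementary. -/
def partitionSetoid (V : Type) : Setoid (Set V) where
  r A B := B = A ∨ B = Aᶜ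
  iseqv := by
    refine ⟨fun A => Or.inl rfl, @fun A B h => ?_, @fun A B C h1 h2 => ?_⟩
    · rcases h with rfl | rfl
      · exact Or.inl rfl
      · exact Or.inr (compl_compl A).symm
    · rcases h1 with rfl | rfl <;> rcases h2 with rfl | rfl
      · exact Or.inl rfl
      · exact Or.inr rfl
      · exact Or.inr rfl
      · exact Or.inl (compl_compl A)

/-- The unordered partitions `A | Aᶜ` of `V`, indexing the variables of `S_G`. -/
abbrev Partition (V : Type) := Quotient (partitionSetoid V)

variable (K : Type) [CommRing K]

/-- The variable `q_{A|Aᶜ}` of the polynomial ring `S_G`. -/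
def qPart {V : Type} (A : Set V) : MvPolynomial (Partition V) K :=
  X (Quotient.mk (partitionSetoid V) A)

/-- The monomial `u_A = ∏_{e ∈ Cut(A)} s_e · ∏_{e ∈ E \ Cut(A)} t_e`;
the variable `s_e` is `X (true, e)` and `t_e` is `X (false, e)`. -/
def cutMonomial {V : Type} [Finite V] (G : SimpleGraph V) (A : Set V) :
    MvPolynomial (Bool × Sym2 V) K :=
  ∏ e ∈ (Set.toFinite G.edgeSet).toFinset,
    if IsCutEdge A e then X (true, e) else X (false, e)

lemma cutMonomial_compl {V : Type} [Finite V] (G : SimpleGraph V) (A : Set V) :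
    cutMonomial K G Aᶜ = cutMonomial K G A := by
  unfold cutMonomial
  refine Finset.prod_congr rfl fun e _ => ?_
  by_cases h : IsCutEdge A e
  · rw [if_pos ((isCutEdge_compl A e).mpr h), if_pos h]
  · rw [if_neg fun hc => h ((isCutEdge_compl A e).mp hc), if_neg h]

/-- The `K`-algebra homomorphism `φ_G : S_G → R_G`, `q_{A|Aᶜ} ↦ u_A`. -/
def phi {V : Type} [Finite V] (G : SimpleGraph V) :
    MvPolynomial (Partition V) K →ₐ[K] MvPolynomial (Bool × Sym2 V) K :=
  aeval fun p : Partition V =>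
    Quotient.lift (cutMonomial K G)
      (fun A B hAB => by
        have h : B = A ∨ B = Aᶜ := hAB
        rcases h with rfl | rfl
        · rfl
        · exact (cutMonomial_compl K G A).symm) p

/-- The cut ideal `I_G = ker φ_G`. -/
def cutIdeal {V : Type} [Finite V] (G : SimpleGraph V) :
    Ideal (MvPolynomial (Partition V) K) :=
  RingHom.ker (phi K G)

/-- The cut algebra `K[G]`, i.e. the image of `φ_G`: the `K`-subalgebra of `R_G`
generated by the monomials `u_A`. -/
def cutAlgebra {V : Type} [Finite V] (G : SimpleGraph V) :
    Subalgebra K (MvPolynomial (Bool × Sym2 V) K) :=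
  Algebra.adjoin K {m | ∃ A : Set V, m = cutMonomial K G A}

/-- The generator `u_A` of the cut algebra, as an element of the cut algebra. -/
def uGen {V : Type} [Finite V] (G : SimpleGraph V) (A : Set V) : ↥(cutAlgebra K G) :=
  ⟨cutMonomial K G A, Algebra.subset_adjoin ⟨A, rfl⟩⟩

/-- An element of `S_G/I` is homogeneous of degree `d` if it is the class of a homogeneous
polynomial of degree `d`. -/
def QuotHomogeneous {σ : Type} (I : Ideal (MvPolynomial σ K)) (d : ℕ)
    (x : MvPolynomial σ K ⧸ I) : Prop :=
  ∃ f : MvPolynomial σ K, f.IsHomogeneous d ∧ Ideal.Quotient.mk I f = x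

/-- The cut algebra of `H` is an algebra retract of the cut algebra of `G`:
there are homogeneous `K`-algebra homomorphisms `ι : K[H] → K[G]` (injective) and
`π : K[G] → K[H]` with `π ∘ ι = id`. -/
def CutAlgebraRetract {V W : Type} [Finite V] [Finite W]
    (H : SimpleGraph W) (G : SimpleGraph V) : Prop :=
  ∃ (ι : (MvPolynomial (Partition W) K ⧸ cutIdeal K H) →ₐ[K]
      (MvPolynomial (Partition V) K ⧸ cutIdeal K G))
    (π : (MvPolynomial (Partition V) K ⧸ cutIdeal K G) →ₐ[K]
      (MvPolynomial (Partition W) K ⧸ cutIdeal K H)),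
    Function.Injective ι ∧
    (∀ d x, QuotHomogeneous K (cutIdeal K H) d x →
      ∃ d', QuotHomogeneous K (cutIdeal K G) d' (ι x)) ∧
    (∀ d x, QuotHomogeneous K (cutIdeal K G) d x →
      ∃ d', QuotHomogeneous K (cutIdeal K H) d' (π x)) ∧
    π.comp ι = AlgHom.id K _

/-- The graph obtained from `G` by contracting the edge `{u, v}`: the vertex `u` is removed
and merged into `v`. -/
def contractEdge {V : Type} (G : SimpleGraph V) (u v : V) :
    SimpleGraph {x : V // x ≠ u} where
  Adj a b := a ≠ b ∧
    (G.Adj a b ∨ ((a : V) = v ∧ G.Adj u b) ∨ ((b : V) = v ∧ G.Adj a u))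
  symm := by
    constructor
    rintro a b ⟨hne, h | ⟨ha, h⟩ | ⟨hb, h⟩⟩
    · exact ⟨hne.symm, Or.inl h.symm⟩
    · exact ⟨hne.symm, Or.inr (Or.inr ⟨ha, h.symm⟩)⟩
    · exact ⟨hne.symm, Or.inr (Or.inl ⟨hb, h.symm⟩)⟩
  loopless := ⟨fun a h => h.1 rfl⟩

/-- The induced subgraph `G_W` is a neighborhood-minor of `G`: `W` and `W' = Wᶜ` are nonempty
and there is a vertex `v ∈ W` with `W ∩ N_G(W') ⊆ N_{G_W}[v]`. -/
def IsNeighborhoodMinor {V : Type} (G : SimpleGraph V) (W : Set V) : Prop :=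
  W.Nonempty ∧ Wᶜ.Nonempty ∧
    ∃ v ∈ W, ∀ x ∈ W, (∃ y ∈ Wᶜ, G.Adj y x) → x = v ∨ G.Adj v x

/-- The cut vector `δ_A ∈ {0,1}^E` of the partition `A | Aᶜ`. -/
def cutVector {V : Type} (G : SimpleGraph V) (A : Set V) : ↥G.edgeSet → ℝ :=
  fun e => if IsCutEdge A (e : Sym2 V) then 1 else 0

/-- The cut polytope `Cut^□(G) ⊆ ℝ^E`: the convex hull of the cut vectors. -/
def cutPolytope {V : Type} (G : SimpleGraph V) : Set (↥G.edgeSet → ℝ) :=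
  convexHull ℝ {x | ∃ A : Set V, x = cutVector G A}

/-- `F` is a face of `P`: either a trivial face (`P` or `∅`), or the intersection of `P`
with a supporting hyperplane. -/
def IsFace {α : Type} (P F : Set (α → ℝ)) : Prop :=
  F = P ∨ F = ∅ ∨
    ∃ (φ : (α → ℝ) →ₗ[ℝ] ℝ) (c : ℝ), φ ≠ 0 ∧
      (∀ x ∈ P, φ x ≤ c) ∧ F = P ∩ {x | φ x = c}

/-- `P` and `Q` are affinely isomorphic: there is a bijective map from `P` onto `Q`
extending to an affine map. -/
def AffinelyIsomorphic {α β : Type} (P : Set (α → ℝ)) (Q : Set (β → ℝ)) : Prop :=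
  ∃ f : (α → ℝ) →ᵃ[ℝ] (β → ℝ), Set.InjOn f P ∧ f '' P = Q

/-- The monomial `z · ∏_{e ∈ Cut(A)} y_e` of the polytopal algebra of the cut polytope;
the variable `z` is `X none` and `y_e` is `X (some e)`. -/
def polytopeMonomial {V : Type} [Finite V] (G : SimpleGraph V) (A : Set V) :
    MvPolynomial (Option (Sym2 V)) K :=
  X none * ∏ e ∈ (Set.toFinite (cutSet G A)).toFinset, X (some e)

/-- The polytopal algebra `K[Cut^□(G)]`: the subalgebra of `K[y_e (e ∈ E), z]` generated by
the monomials `z · y^{δ_A}` attached to the lattice points (= cut vectors) of `Cut^□(G)`. -/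
def polytopalAlgebra {V : Type} [Finite V] (G : SimpleGraph V) :
    Subalgebra K (MvPolynomial (Option (Sym2 V)) K) :=
  Algebra.adjoin K {m | ∃ A : Set V, m = polytopeMonomial K G A}

/-- `G'` is a combinatorial retract of `G`: it is obtained from `G` by a finite sequence of
edge contractions and neighborhood-minors. -/
inductive CombinatorialRetract : ∀ {V W : Type}, SimpleGraph V → SimpleGraph W → Prop
  | refl {V : Type} (G : SimpleGraph V) : CombinatorialRetract G G
  | contract {V W : Type} (G : SimpleGraph V) (u v : V) (huv : G.Adj u v)
      (G' : SimpleGraph W) (h : CombinatorialRetract (contractEdge G u v) G') :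
      CombinatorialRetract G G'
  | nbhdMinor {V W : Type} (G : SimpleGraph V) (S : Set V)
      (hS : IsNeighborhoodMinor G S) (G' : SimpleGraph W)
      (h : CombinatorialRetract (SimpleGraph.induce S G) G') :
      CombinatorialRetract G G'

/-!
Let `r : V → W` fix `W` and send `Wᶜ` to `v`. The neighborhood condition says exactly that `r`
maps every edge of `G` onto an edge of `H = G_W` or collapses it to a point, while the inclusion
`W → V` is a graph homomorphism `H → G` that `r` inverts on the left. Pulling partitions back
along the two maps gives `q_B ↦ q_{r⁻¹ B}` and `q_A ↦ q_{A ∩ W}`, which compose to the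
identity of `S_H`. Both respect the cut ideals since on cut monomials they are induced by
monomial maps between `R_H` and `R_G`. Edges collapsed by `r` are never cut, so they contribute
the same monomial `∏ t_e` to every `u_{r⁻¹ B}`; it is carried by the variables `s_{f₀}, t_{f₀}`
of a fixed edge `f₀` of `H`, exactly one of which divides each `u_B`. If `H` has no edges,
`K[H] = K`.
-/

lemma isCutEdge_mk {V : Type} {A : Set V} {a b : V} :
    IsCutEdge A s(a, b) ↔ (a ∈ A ∧ b ∉ A) ∨ (b ∈ A ∧ a ∉ A) := by
  constructor
  · rintro ⟨u, w, heq, hu, hw⟩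
    rcases Sym2.eq_iff.mp heq with ⟨rfl, rfl⟩ | ⟨rfl, rfl⟩
    · exact Or.inl ⟨hu, hw⟩
    · exact Or.inr ⟨hu, hw⟩
  · rintro (⟨ha, hb⟩ | ⟨hb, ha⟩)
    · exact ⟨a, b, rfl, ha, hb⟩
    · exact ⟨b, a, Sym2.eq_swap, hb, ha⟩

lemma isCutEdge_preimage {U V : Type} (r : V → U) (B : Set U) (e : Sym2 V) :
    IsCutEdge (r ⁻¹' B) e ↔ IsCutEdge B (Sym2.map r e) := by
  induction e using Sym2.ind with
  | _ a b => simp only [Sym2.map_mk, isCutEdge_mk, Set.mem_preimage]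

lemma not_isCutEdge_of_isDiag {V : Type} {A : Set V} {e : Sym2 V} (he : e.IsDiag) :
    ¬ IsCutEdge A e := by
  rintro ⟨u, w, rfl, hu, hw⟩
  rw [Sym2.mk_isDiag_iff] at he
  exact hw (he ▸ hu)

lemma isDiag_map_of_map_notMem_edgeSet {U V : Type} {G : SimpleGraph V} {H : SimpleGraph U}
    {r : V → U} (hr : ∀ a b, G.Adj a b → r a = r b ∨ H.Adj (r a) (r b)) {e : Sym2 V}
    (he : e ∈ G.edgeSet)
    (hne : Sym2.map r e ∉ H.edgeSet) : (Sym2.map r e).IsDiag := by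
  induction e using Sym2.ind with
  | _ a b =>
    rw [Sym2.map_mk, Sym2.mk_isDiag_iff]
    exact (hr a b he).resolve_right hne

def Partition.comap {U V : Type} (f : U → V) : Partition V → Partition U :=
  Quotient.map (f ⁻¹' ·) (by
    rintro A B (rfl | rfl)
    · exact Or.inl rfl
    · exact Or.inr rfl)

lemma Partition.comap_mk {U V : Type} (f : U → V) (A : Set V) :
    Partition.comap f (Quotient.mk (partitionSetoid V) A)
      = Quotient.mk (partitionSetoid U) (f ⁻¹' A) := rfl

lemma Partition.comap_comap_of_leftInverse {U V : Type} {g : U → V} {r : V → U}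
    (h : Function.LeftInverse r g) (p : Partition U) :
    Partition.comap g (Partition.comap r p) = p := by
  refine Quotient.inductionOn p fun B => ?_
  rw [Partition.comap_mk, Partition.comap_mk, ← Set.preimage_comp, h.comp_eq_id, Set.preimage_id]

section Retraction

variable {U V : Type} [Finite U] [Finite V] (G : SimpleGraph V) (H : SimpleGraph U)

lemma cutMonomial_eq_prod (A : Set V) :
    cutMonomial K G A =
      ∏ e ∈ (Set.toFinite G.edgeSet).toFinset, X (decide (IsCutEdge A e), e) :=
  Finset.prod_congr rfl fun e _ => by by_cases h : IsCutEdge A e <;> simp [h]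

lemma phi_X (A : Set V) : phi K G (X (Quotient.mk (partitionSetoid V) A)) = cutMonomial K G A := by
  rw [phi, aeval_X]
  rfl

lemma phi_X_eq_one_of_edgeSet_eq_empty (hE : G.edgeSet = ∅) (p : Partition V) :
    phi K G (X p) = 1 := by
  refine Quotient.inductionOn p fun A => ?_
  rw [phi_X, cutMonomial]
  exact Finset.prod_eq_one fun e he => by simp [hE] at he

lemma cutIdeal_le_comap_of_phi_comp
    (f : MvPolynomial (Partition U) K →ₐ[K] MvPolynomial (Partition V) K)
    (ψ : MvPolynomial (Bool × Sym2 U) K →ₐ[K] MvPolynomial (Bool × Sym2 V) K)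
    (hf : (phi K G).comp f = ψ.comp (phi K H)) :
    cutIdeal K H ≤ (cutIdeal K G).comap f := by
  intro p hp
  rw [cutIdeal, RingHom.mem_ker] at hp
  rw [Ideal.mem_comap, cutIdeal, RingHom.mem_ker, ← AlgHom.comp_apply, hf, AlgHom.comp_apply,
    hp, map_zero]

def restrictVar (g : H →g G) : Bool × Sym2 V → MvPolynomial (Bool × Sym2 U) K :=
  fun be => ∏ f ∈ (Set.toFinite H.edgeSet).toFinset with Sym2.map g f = be.2, X (be.1, f)

lemma aeval_restrictVar_cutMonomial (g : H →g G) (A : Set V) :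
    aeval (restrictVar K G H g) (cutMonomial K G A) = cutMonomial K H (g ⁻¹' A) := by
  have hmaps : ∀ f ∈ (Set.toFinite H.edgeSet).toFinset,
      Sym2.map g f ∈ (Set.toFinite G.edgeSet).toFinset := fun f hf => by
    simpa using g.map_mem_edgeSet (by simpa using hf)
  rw [cutMonomial_eq_prod, cutMonomial_eq_prod, map_prod,
    ← Finset.prod_fiberwise_of_maps_to hmaps]
  refine Finset.prod_congr rfl fun e _ => ?_
  rw [aeval_X, restrictVar]
  refine Finset.prod_congr rfl fun f hf => ?_
  rw [isCutEdge_preimage, (Finset.mem_filter.mp hf).2]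

lemma phi_comp_rename_comap_hom (g : H →g G) :
    (phi K H).comp (rename (Partition.comap g)) = (aeval (restrictVar K G H g)).comp (phi K G) := by
  refine algHom_ext fun p => Quotient.inductionOn p fun A => ?_
  rw [AlgHom.comp_apply, AlgHom.comp_apply, rename_X, Partition.comap_mk, phi_X, phi_X,
    aeval_restrictVar_cutMonomial]

def collapseVar (r : V → U) (f₀ : Sym2 U) :
    Bool × Sym2 U → MvPolynomial (Bool × Sym2 V) K :=
  fun bf =>
    (if bf.2 = f₀ then
      ∏ e ∈ (Set.toFinite G.edgeSet).toFinset with Sym2.map r e ∉ H.edgeSet, X (false, e)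
    else 1) * ∏ e ∈ (Set.toFinite G.edgeSet).toFinset with Sym2.map r e = bf.2, X (bf.1, e)

lemma aeval_collapseVar_cutMonomial {r : V → U}
    (hr : ∀ a b, G.Adj a b → r a = r b ∨ H.Adj (r a) (r b)) {f₀ : Sym2 U}
    (hf₀ : f₀ ∈ H.edgeSet) (B : Set U) :
    aeval (collapseVar K G H r f₀) (cutMonomial K H B) = cutMonomial K G (r ⁻¹' B) := by
  set EG := (Set.toFinite G.edgeSet).toFinset
  set EH := (Set.toFinite H.edgeSet).toFinset
  have collapsed : ∏ e ∈ EG with Sym2.map r e ∉ EH, X (decide (IsCutEdge (r ⁻¹' B) e), e) =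
      ∏ e ∈ EG with Sym2.map r e ∉ H.edgeSet,
        (X (false, e) : MvPolynomial (Bool × Sym2 V) K) := by
    refine Finset.prod_congr (by simp [EH]) fun e he => ?_
    obtain ⟨heG, hne⟩ := Finset.mem_filter.mp he
    rw [isCutEdge_preimage, decide_eq_false (not_isCutEdge_of_isDiag
      (isDiag_map_of_map_notMem_edgeSet hr (by simpa [EG] using heG) (by simpa [EH] using hne)))]
  have uncollapsed : ∏ f ∈ EH, ∏ e ∈ EG with Sym2.map r e = f,
        (X (decide (IsCutEdge B f), e) : MvPolynomial (Bool × Sym2 V) K) =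
      ∏ e ∈ EG with Sym2.map r e ∈ EH, X (decide (IsCutEdge (r ⁻¹' B) e), e) := by
    rw [← Finset.prod_fiberwise_eq_prod_filter]
    refine Finset.prod_congr rfl fun f _ => Finset.prod_congr rfl fun e he => ?_
    rw [isCutEdge_preimage, (Finset.mem_filter.mp he).2]
  rw [cutMonomial_eq_prod, cutMonomial_eq_prod, map_prod, ← Finset.prod_filter_mul_prod_filter_not
    EG (fun e => Sym2.map r e ∈ EH), collapsed, ← uncollapsed, mul_comm]
  simp only [aeval_X, collapseVar]
  rw [Finset.prod_mul_distrib, Finset.prod_ite_eq' EH f₀, if_pos (by simpa [EH] using hf₀)]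

lemma phi_comp_rename_comap_collapse {r : V → U}
    (hr : ∀ a b, G.Adj a b → r a = r b ∨ H.Adj (r a) (r b)) {f₀ : Sym2 U}
    (hf₀ : f₀ ∈ H.edgeSet) :
    (phi K G).comp (rename (Partition.comap r))
      = (aeval (collapseVar K G H r f₀)).comp (phi K H) := by
  refine algHom_ext fun p => Quotient.inductionOn p fun B => ?_
  rw [AlgHom.comp_apply, AlgHom.comp_apply, rename_X, Partition.comap_mk, phi_X, phi_X,
    aeval_collapseVar_cutMonomial K G H hr hf₀]

lemma cutAlgebraRetract_of_quotientMap
    (f : MvPolynomial (Partition U) K →ₐ[K] MvPolynomial (Partition V) K)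
    (g : MvPolynomial (Partition V) K →ₐ[K] MvPolynomial (Partition U) K)
    (hf : cutIdeal K H ≤ (cutIdeal K G).comap f) (hg : cutIdeal K G ≤ (cutIdeal K H).comap g)
    (hgf : ∀ p, Ideal.Quotient.mk (cutIdeal K H) (g (f (X p)))
      = Ideal.Quotient.mk (cutIdeal K H) (X p))
    (hf_hom : ∀ d x, IsHomogeneous x d → ∃ d', IsHomogeneous (f x) d')
    (hg_hom : ∀ d x, IsHomogeneous x d → ∃ d', IsHomogeneous (g x) d') :
    CutAlgebraRetract K H G := by
  have hπι : (Ideal.quotientMapₐ _ g hg).comp (Ideal.quotientMapₐ _ f hf) = AlgHom.id K _ :=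
    Ideal.Quotient.algHom_ext _ (algHom_ext fun p => hgf p)
  refine ⟨Ideal.quotientMapₐ _ f hf, Ideal.quotientMapₐ _ g hg,
    Function.LeftInverse.injective (g := Ideal.quotientMapₐ _ g hg) (AlgHom.congr_fun hπι),
    ?_, ?_, hπι⟩
  · rintro d _ ⟨x, hx, rfl⟩
    obtain ⟨d', hd'⟩ := hf_hom d x hx
    exact ⟨d', f x, hd', rfl⟩
  · rintro d _ ⟨x, hx, rfl⟩
    obtain ⟨d', hd'⟩ := hg_hom d x hx
    exact ⟨d', g x, hd', rfl⟩

theorem cutAlgebraRetract_of_retraction (g : H →g G) (r : V → U)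
    (hrg : Function.LeftInverse r g) (hr : ∀ a b, G.Adj a b → r a = r b ∨ H.Adj (r a) (r b)) :
    CutAlgebraRetract K H G := by
  have hπ := cutIdeal_le_comap_of_phi_comp K H G _ _ (phi_comp_rename_comap_hom K G H g)
  have rename_hom {σ τ : Type} (k : σ → τ) :
      ∀ d (x : MvPolynomial σ K), IsHomogeneous x d → ∃ d', IsHomogeneous (rename k x) d' :=
    fun d _ hx => ⟨d, hx.rename_isHomogeneous⟩
  rcases H.edgeSet.eq_empty_or_nonempty with hE | ⟨f₀, hf₀⟩
  · set ε : MvPolynomial (Partition U) K →ₐ[K] MvPolynomial (Partition V) K :=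
      (Algebra.ofId K _).comp (aeval fun _ => 1)
    have hφε : (phi K G).comp ε = ((Algebra.ofId K _).comp (aeval fun _ => 1)).comp (phi K H) :=
      algHom_ext fun p => by simp [ε, phi_X_eq_one_of_edgeSet_eq_empty K H hE]
    refine cutAlgebraRetract_of_quotientMap K G H ε _
      (cutIdeal_le_comap_of_phi_comp K G H ε _ hφε) hπ
      (fun p => ?_) (fun _ x _ => ⟨0, isHomogeneous_C _ _⟩) (rename_hom _)
    rw [Ideal.Quotient.eq, cutIdeal, RingHom.mem_ker]
    simp [ε, phi_X_eq_one_of_edgeSet_eq_empty K H hE]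
  · refine cutAlgebraRetract_of_quotientMap K G H _ _
      (cutIdeal_le_comap_of_phi_comp K G H _ _ (phi_comp_rename_comap_collapse K G H hr hf₀)) hπ
      (fun p => ?_) (rename_hom _) (rename_hom _)
    rw [rename_X, rename_X, Partition.comap_comap_of_leftInverse hrg]

end Retraction

section NeighborhoodMinor

variable {V : Type} {W : Set V} {v : V}

def collapseOnto (hv : v ∈ W) (x : V) : W := if hx : x ∈ W then ⟨x, hx⟩ else ⟨v, hv⟩

lemma collapseOnto_of_mem (hv : v ∈ W) {x : V} (hx : x ∈ W) : collapseOnto hv x = ⟨x, hx⟩ :=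
  dif_pos hx

lemma collapseOnto_of_notMem (hv : v ∈ W) {x : V} (hx : x ∉ W) :
    collapseOnto hv x = ⟨v, hv⟩ :=
  dif_neg hx

lemma leftInverse_collapseOnto (hv : v ∈ W) :
    Function.LeftInverse (collapseOnto hv) Subtype.val :=
  fun x => collapseOnto_of_mem hv x.2

lemma collapseOnto_adj {G : SimpleGraph V} (hv : v ∈ W)
    (hN : ∀ x ∈ W, (∃ y ∈ Wᶜ, G.Adj y x) → x = v ∨ G.Adj v x) {a b : V}
    (hab : G.Adj a b) :
    collapseOnto hv a = collapseOnto hv b ∨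
      (G.induce W).Adj (collapseOnto hv a) (collapseOnto hv b) := by
  by_cases ha : a ∈ W <;> by_cases hb : b ∈ W
  · rw [collapseOnto_of_mem hv ha, collapseOnto_of_mem hv hb]
    exact Or.inr hab
  · rw [collapseOnto_of_mem hv ha, collapseOnto_of_notMem hv hb]
    rcases hN a ha ⟨b, hb, hab.symm⟩ with rfl | hva
    · exact Or.inl rfl
    · exact Or.inr hva.symm
  · rw [collapseOnto_of_notMem hv ha, collapseOnto_of_mem hv hb]
    rcases hN b hb ⟨a, ha, hab⟩ with rfl | hvb
    · exact Or.inl rfl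
    · exact Or.inr hvb
  · rw [collapseOnto_of_notMem hv ha, collapseOnto_of_notMem hv hb]
    exact Or.inl rfl

end NeighborhoodMinor

theorem stmt4 {V : Type} [Fintype V] (K : Type) [Field K]
    (G : SimpleGraph V) (W : Set V) (h : IsNeighborhoodMinor G W) :
    CutAlgebraRetract K (SimpleGraph.induce W G) G := by
  obtain ⟨-, -, v, hv, hN⟩ := h
  exact cutAlgebraRetract_of_retraction K G (G.induce W) (SimpleGraph.Embedding.induce W).toHom
    (collapseOnto hv) (leftInverse_collapseOnto hv) fun a b hab => collapseOnto_adj hv hN hab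

end CutPaper
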